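/- Let Λ ⊂ ℤ^d be finite, written as a disjoint union of finitely many boxes C_1, …, C_M, and let H_Λ and H_{C_p} denote restrictions of a discrete Schrödinger operator H = Δ + V. Then for Im z > 0, |Tr(H_Λ − z)^{-1} − Σ_p Tr(H_{C_p} − z)^{-1}| ≤ B · ((Im z)^{-2} + 2(Im z)^{-1} · W), where B = Σ_p #∂C_p is the total number of boundary bonds and W bounds the number of sites near the boundary; in particular the difference of traces is controlled by boundary terms via the geometric resolvent identity. -/

import Mathlib

/-!
For Hermitian `A` and `Im z ≠ 0` one has `Im ⟪x, (A - z) x⟫ = -Im z ‖x‖²`, so every row and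
every column of `G = (A - z)⁻¹` has `ℓ²`-norm at most `|Im z|⁻¹`. If `A_C` is the restriction
of `A` to a box `C`, `G_C = (A_C - z)⁻¹` and `J` is the restriction map, then
`J G - G_C J = G_C (A_C J - J A) G` (the geometric resolvent identity), and `A_C J - J A`
only retains the couplings `A m k` with `m ∈ C`, `k ∉ C`. Cauchy–Schwarz bounds the
contribution of each such coupling to `∑_{n ∈ C} |G n n - G_C n n|` by `|A m k| (Im z)⁻²`.
For the discrete Schrödinger operator these couplings are the boundary bonds, of weight one,
so the trace difference is already at most `B (Im z)⁻²`.
-/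

open MeasureTheory Finset

open Function Matrix

theorem LinearMap.IsSymmetric.abs_im_mul_norm_le {E : Type*} [NormedAddCommGroup E]
    [InnerProductSpace ℂ E] {T : E →ₗ[ℂ] E} (hT : T.IsSymmetric) (z : ℂ) (x : E) :
    |z.im| * ‖x‖ ≤ ‖T x - z • x‖ := by
  have him : (inner ℂ x (T x - z • x)).im = -(z.im * ‖x‖ ^ 2) := by
    rw [inner_sub_right, inner_smul_right, inner_self_eq_norm_sq_to_K, Complex.sub_im,
      Complex.mul_im, show (inner ℂ x (T x)).im = 0 from hT.im_inner_self_apply x]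
    simp [← Complex.ofReal_pow]
  have key : |z.im| * ‖x‖ * ‖x‖ ≤ ‖T x - z • x‖ * ‖x‖ :=
    calc |z.im| * ‖x‖ * ‖x‖ = |(inner ℂ x (T x - z • x)).im| := by
          rw [him, abs_neg, abs_mul, abs_of_nonneg (sq_nonneg ‖x‖), sq, mul_assoc]
      _ ≤ ‖inner ℂ x (T x - z • x)‖ := Complex.abs_im_le_norm _
      _ ≤ ‖x‖ * ‖T x - z • x‖ := norm_inner_le_norm _ _
      _ = ‖T x - z • x‖ * ‖x‖ := mul_comm _ _
  rcases (norm_nonneg x).eq_or_lt with hx | hx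
  · rw [← hx, mul_zero]; positivity
  · exact le_of_mul_le_mul_right key hx

namespace Matrix

section Resolvent

variable {n : Type*} [Fintype n] [DecidableEq n] {A : Matrix n n ℂ}

theorem IsHermitian.abs_im_mul_norm_le (hA : A.IsHermitian) (z : ℂ) (x : n → ℂ) :
    |z.im| * ‖WithLp.toLp 2 x‖ ≤ ‖WithLp.toLp 2 ((A - z • 1) *ᵥ x)‖ := by
  simpa [sub_mulVec, smul_mulVec] using
    (isSymmetric_toEuclideanLin_iff.mpr hA).abs_im_mul_norm_le z (WithLp.toLp 2 x)

theorem IsHermitian.isUnit_det_sub_smul_one (hA : A.IsHermitian) {z : ℂ} (hz : z.im ≠ 0) :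
    IsUnit (A - z • 1).det := by
  rw [← isUnit_iff_isUnit_det, ← mulVec_injective_iff_isUnit]
  refine (injective_iff_map_eq_zero (A - z • 1).mulVecLin).2 fun x hx => ?_
  have h := hA.abs_im_mul_norm_le z x
  rw [show (A - z • 1) *ᵥ x = 0 from hx, WithLp.toLp_zero, norm_zero] at h
  have hx0 : ‖WithLp.toLp 2 x‖ = 0 := by
    nlinarith [abs_pos.2 hz, norm_nonneg (WithLp.toLp 2 x)]
  simpa using hx0

theorem IsHermitian.sum_col_norm_sq_inv_sub_smul_one_le (hA : A.IsHermitian) {z : ℂ}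
    (hz : z.im ≠ 0) (j : n) : ∑ i, ‖(A - z • 1)⁻¹ i j‖ ^ 2 ≤ z.im⁻¹ ^ 2 := by
  set G := (A - z • 1)⁻¹
  have hcol : (A - z • 1) *ᵥ (G *ᵥ Pi.single j 1) = Pi.single j 1 := by
    rw [mulVec_mulVec, mul_nonsing_inv _ (hA.isUnit_det_sub_smul_one hz), one_mulVec]
  have h := hA.abs_im_mul_norm_le z (G *ᵥ Pi.single j 1)
  rw [hcol, PiLp.toLp_single, PiLp.norm_single, norm_one, ← le_div_iff₀' (abs_pos.2 hz),
    one_div, ← abs_inv] at h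
  calc ∑ i, ‖G i j‖ ^ 2 = ‖WithLp.toLp 2 (G *ᵥ Pi.single j 1)‖ ^ 2 := by
        simp [EuclideanSpace.norm_sq_eq]
    _ ≤ |z.im⁻¹| ^ 2 := pow_le_pow_left₀ (norm_nonneg _) h 2
    _ = z.im⁻¹ ^ 2 := sq_abs _

theorem IsHermitian.sum_row_norm_sq_inv_sub_smul_one_le (hA : A.IsHermitian) {z : ℂ}
    (hz : z.im ≠ 0) (i : n) : ∑ j, ‖(A - z • 1)⁻¹ i j‖ ^ 2 ≤ z.im⁻¹ ^ 2 := by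
  have hconj : ((A - z • 1)⁻¹)ᴴ = (A - star z • 1)⁻¹ := by
    rw [conjTranspose_nonsing_inv, conjTranspose_sub, hA.eq, conjTranspose_smul,
      conjTranspose_one]
  have hz' : (star z).im = -z.im := Complex.conj_im z
  calc ∑ j, ‖(A - z • 1)⁻¹ i j‖ ^ 2 = ∑ j, ‖(A - star z • 1)⁻¹ j i‖ ^ 2 := by
        simp_rw [← hconj, conjTranspose_apply, norm_star]
    _ ≤ (star z).im⁻¹ ^ 2 :=
        hA.sum_col_norm_sq_inv_sub_smul_one_le (by rwa [hz', neg_ne_zero]) i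
    _ = z.im⁻¹ ^ 2 := by rw [hz', inv_neg, neg_sq]

end Resolvent

section Decoupling

variable {ι κ : Type*} [Fintype ι] [Fintype κ]

theorem mul_sub_mul_eq_of_mul_eq_one {R : Type*} [Ring R] [DecidableEq ι] [DecidableEq κ]
    {A G : Matrix ι ι R} {A' G' : Matrix κ κ R} (hG : A * G = 1) (hG' : G' * A' = 1)
    (J : Matrix κ ι R) : J * G - G' * J = G' * (A' * J - J * A) * G := by
  simp only [Matrix.mul_sub, Matrix.sub_mul, ← Matrix.mul_assoc, hG', Matrix.one_mul]
  simp only [Matrix.mul_assoc, hG, Matrix.mul_one]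

theorem submatrix_mul_sub_mul_apply {R : Type*} [Ring R] [DecidableEq ι] {e : κ → ι}
    (he : Injective e) (B : Matrix ι ι R) (m : κ) (k : ι) :
    (B.submatrix e e * (1 : Matrix ι ι R).submatrix e id -
        (1 : Matrix ι ι R).submatrix e id * B) m k =
      if k ∈ univ.image e then 0 else -B (e m) k := by
  classical
  split_ifs with hk
  · obtain ⟨m', -, rfl⟩ := mem_image.1 hk
    simp [mul_apply, one_apply, he.eq_iff]
  · have hk' : ∀ m', e m' ≠ k := fun m' h => hk (mem_image.2 ⟨m', mem_univ _, h⟩)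
    simp [mul_apply, one_apply, hk']

theorem sum_norm_mul_mul_apply_le {𝕜 : Type*} [SeminormedRing 𝕜] {P : Matrix κ κ 𝕜}
    {Γ : Matrix κ ι 𝕜} {Q : Matrix ι ι 𝕜} {e : κ → ι} (he : Injective e) {c : ℝ}
    (hP : ∀ m, ∑ n, ‖P n m‖ ^ 2 ≤ c ^ 2) (hQ : ∀ k, ∑ i, ‖Q k i‖ ^ 2 ≤ c ^ 2) :
    ∑ n, ‖(P * Γ * Q) n (e n)‖ ≤ (∑ m, ∑ k, ‖Γ m k‖) * c ^ 2 := by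
  have hCS : ∀ m k, ∑ n, ‖P n m‖ * ‖Q k (e n)‖ ≤ c ^ 2 := by
    intro m k
    have hQe : ∑ n, ‖Q k (e n)‖ ^ 2 ≤ c ^ 2 :=
      calc ∑ n, ‖Q k (e n)‖ ^ 2 = ∑ i ∈ univ.map ⟨e, he⟩, ‖Q k i‖ ^ 2 :=
            (sum_map univ ⟨e, he⟩ fun i => ‖Q k i‖ ^ 2).symm
        _ ≤ c ^ 2 := (sum_le_univ_sum_of_nonneg fun _ => by positivity).trans (hQ k)
    refine (pow_le_pow_iff_left₀ (by positivity) (by positivity) two_ne_zero).1 ?_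
    calc (∑ n, ‖P n m‖ * ‖Q k (e n)‖) ^ 2
        ≤ (∑ n, ‖P n m‖ ^ 2) * ∑ n, ‖Q k (e n)‖ ^ 2 := sum_mul_sq_le_sq_mul_sq _ _ _
      _ ≤ c ^ 2 * c ^ 2 := mul_le_mul (hP m) hQe (by positivity) (by positivity)
      _ = (c ^ 2) ^ 2 := by ring
  calc ∑ n, ‖(P * Γ * Q) n (e n)‖
      ≤ ∑ n, ∑ m, ∑ k, ‖Γ m k‖ * (‖P n m‖ * ‖Q k (e n)‖) := by
        refine sum_le_sum fun n _ => ?_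
        simp only [mul_apply, sum_mul]
        rw [sum_comm]
        refine (norm_sum_le _ _).trans (sum_le_sum fun m _ => (norm_sum_le _ _).trans ?_)
        refine sum_le_sum fun k _ => ?_
        exact norm_mul₃_le.trans_eq (by ring)
    _ = ∑ m, ∑ k, ‖Γ m k‖ * ∑ n, ‖P n m‖ * ‖Q k (e n)‖ := by
        simp_rw [mul_sum]; rw [sum_comm]; exact sum_congr rfl fun _ _ => sum_comm
    _ ≤ ∑ m, ∑ k, ‖Γ m k‖ * c ^ 2 :=
        sum_le_sum fun m _ => sum_le_sum fun k _ =>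
          mul_le_mul_of_nonneg_left (hCS m k) (norm_nonneg _)
    _ = (∑ m, ∑ k, ‖Γ m k‖) * c ^ 2 := by simp_rw [sum_mul]

theorem IsHermitian.sum_norm_inv_sub_submatrix_inv_le [DecidableEq ι] [DecidableEq κ]
    {A : Matrix ι ι ℂ} (hA : A.IsHermitian) {e : κ → ι} (he : Injective e) {z : ℂ}
    (hz : z.im ≠ 0) :
    ∑ n, ‖(A - z • 1)⁻¹ (e n) (e n) - (A.submatrix e e - z • 1)⁻¹ n n‖ ≤
      (∑ m, ∑ k ∈ (univ.image e)ᶜ, ‖A (e m) k‖) * z.im⁻¹ ^ 2 := by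
  set B := A - z • 1
  set G' := (A.submatrix e e - z • 1)⁻¹
  set J := (1 : Matrix ι ι ℂ).submatrix e id
  have hA' : (A.submatrix e e).IsHermitian := hA.submatrix e
  have hG : B * B⁻¹ = 1 := mul_nonsing_inv _ (hA.isUnit_det_sub_smul_one hz)
  have hG' : G' * B.submatrix e e = 1 := by
    rw [show B.submatrix e e = A.submatrix e e - z • 1 by ext; simp [B, one_apply, he.eq_iff]]
    exact nonsing_inv_mul _ (hA'.isUnit_det_sub_smul_one hz)
  have hdiag : ∀ n, B⁻¹ (e n) (e n) - G' n n = (J * B⁻¹ - G' * J) n (e n) := by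
    intro n
    simp [J, mul_apply, one_apply, he.eq_iff]
  have hΓ : ∑ m, ∑ k, ‖(B.submatrix e e * J - J * B) m k‖ =
      ∑ m, ∑ k ∈ (univ.image e)ᶜ, ‖A (e m) k‖ := by
    simp_rw [J, submatrix_mul_sub_mul_apply he, apply_ite norm, norm_zero, norm_neg, sum_ite,
      sum_const_zero, zero_add]
    refine sum_congr rfl fun m _ => sum_congr (by ext; simp) fun k hk => ?_
    have hkm : e m ≠ k := fun h => by simp [← h] at hk
    simp [B, hkm]
  calc ∑ n, ‖B⁻¹ (e n) (e n) - G' n n‖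
      = ∑ n, ‖(G' * (B.submatrix e e * J - J * B) * B⁻¹) n (e n)‖ := by
        simp_rw [hdiag, mul_sub_mul_eq_of_mul_eq_one hG hG']
    _ ≤ (∑ m, ∑ k, ‖(B.submatrix e e * J - J * B) m k‖) * z.im⁻¹ ^ 2 :=
        sum_norm_mul_mul_apply_le he (hA'.sum_col_norm_sq_inv_sub_smul_one_le hz)
          (hA.sum_row_norm_sq_inv_sub_smul_one_le hz)
    _ = _ := by rw [hΓ]

end Decoupling

end Matrix

namespace Finset

theorem sum_coe_sort_biUnion {ι α β : Type*} [Fintype ι] [DecidableEq α] [AddCommMonoid β]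
    {t : ι → Finset α} (ht : ∀ i j, i ≠ j → Disjoint (t i) (t j)) (f : univ.biUnion t → β) :
    ∑ x, f x =
      ∑ i, ∑ x : t i, f ⟨x, subset_biUnion_of_mem t (mem_univ i) (Subtype.prop x)⟩ := by
  let g : α → β := fun x => if h : x ∈ univ.biUnion t then f ⟨x, h⟩ else 0
  calc ∑ x, f x = ∑ x ∈ univ.biUnion t, g x := by
        rw [← sum_coe_sort _ g]; exact sum_congr rfl fun x _ => by simp only [g, dif_pos x.2]
    _ = ∑ i, ∑ x ∈ t i, g x := sum_biUnion fun i _ j _ hij => ht i j hij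
    _ = _ := sum_congr rfl fun i _ => by
        rw [← sum_coe_sort _ g]
        exact sum_congr rfl fun x _ => by
          simp only [g, dif_pos (subset_biUnion_of_mem t (mem_univ i) x.2)]

theorem sum_sum_compl_image_eq_sum_product_sdiff {α β : Type*} [DecidableEq α] [AddCommMonoid β]
    {s t : Finset α} (hst : s ⊆ t) (f : α × α → β) :
    ∑ m : s, ∑ k ∈ (univ.image fun n : s => (⟨n, hst n.2⟩ : t))ᶜ, f (m, k) =
      ∑ q ∈ s ×ˢ (t \ s), f q := by
  rw [sum_product, ← sum_coe_sort s]
  refine sum_congr rfl fun m _ => ?_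
  refine (sum_map _ (Embedding.subtype (· ∈ t)) fun k => f (m, k)).symm.trans
    (sum_congr ?_ fun _ _ => rfl)
  ext x
  simp [and_comm]

end Finset

def schrodingerKernel {d : ℕ} (v : (Fin d → ℤ) → ℝ) (n m : Fin d → ℤ) : ℂ :=
  (if (∑ j, |n j - m j|) = 1 then (1 : ℂ) else 0) + (if n = m then (v n : ℂ) else 0)

section SchrodingerKernel

variable {d : ℕ} (v : (Fin d → ℤ) → ℝ)

theorem star_schrodingerKernel (n m : Fin d → ℤ) :
    star (schrodingerKernel v n m) = schrodingerKernel v m n := by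
  have hsymm : (∑ j, |n j - m j|) = ∑ j, |m j - n j| :=
    sum_congr rfl fun j _ => abs_sub_comm _ _
  by_cases h : n = m
  · subst h; simp [schrodingerKernel]
  · simp [schrodingerKernel, h, Ne.symm h, hsymm, apply_ite]

theorem sum_norm_schrodingerKernel_product_sdiff (s t : Finset (Fin d → ℤ)) :
    ∑ q ∈ s ×ˢ (t \ s), ‖schrodingerKernel v q.1 q.2‖ =
      #((s ×ˢ (t \ s)).filter fun q => (∑ j, |q.1 j - q.2 j|) = 1) := by
  rw [← sum_boole]
  refine sum_congr rfl fun q hq => ?_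
  have hne : q.1 ≠ q.2 := by
    rw [mem_product, mem_sdiff] at hq
    exact fun h => hq.2.2 (h ▸ hq.1)
  simp [schrodingerKernel, hne, apply_ite]

end SchrodingerKernel

theorem trace_resolvent_decoupling_boundary_bound_general
    (d : ℕ) (v : (Fin d → ℤ) → ℝ)
    -- the kernel of the discrete Schrödinger operator `H = Δ + V`
    (K : (Fin d → ℤ) → (Fin d → ℤ) → ℂ)
    (hK : ∀ n m, K n m = (if (∑ j, |n j - m j|) = 1 then (1 : ℂ) else 0) +
      (if n = m then (v n : ℂ) else 0))
    (Λ : Finset (Fin d → ℤ)) (M : ℕ) (C : Fin M → Finset (Fin d → ℤ))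
    (hdisj : ∀ p q, p ≠ q → Disjoint (C p) (C q))
    (hunion : Λ = Finset.univ.biUnion C)
    -- interior sites of each box, and a bound `W` on the number of near-boundary sites
    (interior : Fin M → Finset (Fin d → ℤ))
    (W : ℝ) (hW : ((∑ p, (C p \ interior p).card : ℕ) : ℝ) ≤ W)
    -- `B` is the total number of boundary bonds
    (B : ℝ)
    (hB : B = ((∑ p, (((C p) ×ˢ (Λ \ C p)).filter
        (fun q => (∑ j, |q.1 j - q.2 j|) = 1)).card : ℕ) : ℝ))
    (z : ℂ) (hz : 0 < z.im)
    -- the restricted operators as matrices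
    (HΛ : Matrix Λ Λ ℂ) (hHΛ : ∀ n m : Λ, HΛ n m = K n.1 m.1)
    (HC : ∀ p : Fin M, Matrix (C p) (C p) ℂ)
    (hHC : ∀ (p : Fin M) (n m : C p), HC p n m = K n.1 m.1) :
    ‖Matrix.trace ((HΛ - z • (1 : Matrix Λ Λ ℂ))⁻¹) -
        ∑ p, Matrix.trace ((HC p - z • (1 : Matrix (C p) (C p) ℂ))⁻¹)‖
      ≤ B * ((z.im)⁻¹ ^ 2 + 2 * (z.im)⁻¹ * W) := by
  obtain rfl : K = schrodingerKernel v := funext₂ hK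
  subst hunion
  let e p (n : C p) : univ.biUnion C := ⟨n, subset_biUnion_of_mem C (mem_univ p) n.2⟩
  have he p : Injective (e p) := fun _ _ h => Subtype.ext (Subtype.mk.inj h)
  have hHerm : HΛ.IsHermitian :=
    IsHermitian.ext fun n m => by rw [hHΛ, hHΛ, star_schrodingerKernel]
  have hbox p : ∑ n, ‖(HΛ - z • 1)⁻¹ (e p n) (e p n) - (HC p - z • 1)⁻¹ n n‖ ≤
      #((C p ×ˢ (univ.biUnion C \ C p)).filter fun q => (∑ j, |q.1 j - q.2 j|) = 1) *
        z.im⁻¹ ^ 2 := by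
    rw [show HC p = HΛ.submatrix (e p) (e p) by ext; simp [e, hHC, hHΛ],
      ← sum_norm_schrodingerKernel_product_sdiff, ← sum_sum_compl_image_eq_sum_product_sdiff]
    simpa [hHΛ] using hHerm.sum_norm_inv_sub_submatrix_inv_le (he p) hz.ne'
  have hB0 : 0 ≤ B := hB ▸ Nat.cast_nonneg _
  have hW0 : 0 ≤ W := (Nat.cast_nonneg _).trans hW
  calc _ = ‖∑ p, ∑ n, ((HΛ - z • 1)⁻¹ (e p n) (e p n) - (HC p - z • 1)⁻¹ n n)‖ := by
        simp_rw [trace, Matrix.diag, sum_coe_sort_biUnion hdisj, ← sum_sub_distrib]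
        rfl
    _ ≤ ∑ p, ∑ n, ‖(HΛ - z • 1)⁻¹ (e p n) (e p n) - (HC p - z • 1)⁻¹ n n‖ :=
        (norm_sum_le _ _).trans (sum_le_sum fun p _ => norm_sum_le _ _)
    _ ≤ B * z.im⁻¹ ^ 2 := by
        rw [hB, Nat.cast_sum, sum_mul]
        exact sum_le_sum fun p _ => hbox p
    _ ≤ B * (z.im⁻¹ ^ 2 + 2 * z.im⁻¹ * W) := by
        have hc : 0 ≤ z.im⁻¹ := inv_nonneg.2 hz.le
        gcongr
        exact le_add_of_nonneg_right (by positivity)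

/-- Let `Λ ⊂ ℤ^d` be a finite set, a disjoint union of boxes `C_1, …, C_M`, and let
`H_Λ`, `H_{C_p}` be restrictions of a discrete Schrödinger operator `H = Δ + V`. For
`Im z > 0`, the difference `Tr(H_Λ − z)^{-1} − Σ_p Tr(H_{C_p} − z)^{-1}` is bounded by
boundary terms: `≤ B·((Im z)^{-2} + 2(Im z)^{-1}·W)`, where `B` is the total number of
boundary bonds and `W` bounds the number of sites near the boundary. -/
theorem trace_resolvent_decoupling_boundary_bound
    (d : ℕ) (v : (Fin d → ℤ) → ℝ)
    -- the kernel of the discrete Schrödinger operator `H = Δ + V`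
    (K : (Fin d → ℤ) → (Fin d → ℤ) → ℂ)
    (hK : ∀ n m, K n m = (if (∑ j, |n j - m j|) = 1 then (1 : ℂ) else 0) +
      (if n = m then (v n : ℂ) else 0))
    (Λ : Finset (Fin d → ℤ)) (M : ℕ) (C : Fin M → Finset (Fin d → ℤ))
    (hdisj : ∀ p q, p ≠ q → Disjoint (C p) (C q))
    (hunion : Λ = Finset.univ.biUnion C)
    -- interior sites of each box, and a bound `W` on the number of near-boundary sites
    (interior : Fin M → Finset (Fin d → ℤ)) (hint : ∀ p, interior p ⊆ C p)
    (W : ℝ) (hW : ((∑ p, (C p \ interior p).card : ℕ) : ℝ) ≤ W)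
    -- `B` is the total number of boundary bonds
    (B : ℝ)
    (hB : B = ((∑ p, (((C p) ×ˢ (Λ \ C p)).filter
        (fun q => (∑ j, |q.1 j - q.2 j|) = 1)).card : ℕ) : ℝ))
    (z : ℂ) (hz : 0 < z.im)
    -- the restricted operators as matrices
    (HΛ : Matrix Λ Λ ℂ) (hHΛ : ∀ n m : Λ, HΛ n m = K n.1 m.1)
    (HC : ∀ p : Fin M, Matrix (C p) (C p) ℂ)
    (hHC : ∀ (p : Fin M) (n m : C p), HC p n m = K n.1 m.1) :
    ‖Matrix.trace ((HΛ - z • (1 : Matrix Λ Λ ℂ))⁻¹) -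
        ∑ p, Matrix.trace ((HC p - z • (1 : Matrix (C p) (C p) ℂ))⁻¹)‖
      ≤ B * ((z.im)⁻¹ ^ 2 + 2 * (z.im)⁻¹ * W) :=
  trace_resolvent_decoupling_boundary_bound_general d v K hK Λ M C hdisj hunion interior W hW B hB z
    hz HΛ hHΛ HC hHC
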